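/- arXiv:1501.01836 — 2 statements merged into one kernel-verified Lean document; each statement's English description precedes it below -/
import Mathlib

section
/- Let g₁ and g₂ be inner products on V, let a and b be positive real numbers, and let φ be an alternating m-form on V. Writing C = comass (a • g₁ + b • g₂) φ, C₁ = comass g₁ φ and C₂ = comass g₂ φ, one has C² * (a^m * C₂² + b^m * C₁²) ≤ C₁² * C₂² (equivalently, 1/C² ≥ a^m/C₁² + b^m/C₂² whenever C, C₁, C₂ are positive). -/
open Matrix

/-- The Gram matrix of an `m`-tuple of vectors with respect to a bilinear form `g`. -/
noncomputable def gramMat {V : Type*} [AddCommGroup V] [Module ℝ V] (m : ℕ)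
    (g : LinearMap.BilinForm ℝ V) (v : Fin m → V) : Matrix (Fin m) (Fin m) ℝ :=
  Matrix.of fun i j => g (v i) (v j)

/-- The comass of an alternating `m`-form `φ` with respect to a bilinear form `g`. -/
noncomputable def comass {V : Type*} [AddCommGroup V] [Module ℝ V] (m : ℕ)
    (g : LinearMap.BilinForm ℝ V) (φ : V [⋀^Fin m]→ₗ[ℝ] ℝ) : ℝ :=
  sSup {x : ℝ | ∃ v : Fin m → V, (gramMat m g v).det ≠ 0 ∧
    x = φ v / Real.sqrt (gramMat m g v).det}

/-!
For linearly independent `v`, the definition of the comass gives `φ(v)² ≤ Cᵢ² det Gᵢ(v)`, while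
the determinant is superadditive on positive semidefinite matrices (diagonalise
`A^{-1/2} B A^{-1/2}` to get `det (A + B) ≥ det A + det B`), so that
`det G(v) ≥ aᵐ det G₁(v) + bᵐ det G₂(v)` for `G = G_{a g₁ + b g₂}`. Weighting the two bounds by
`aᵐ C₂²` and `bᵐ C₁²` gives `φ(v)² (aᵐ C₂² + bᵐ C₁²) ≤ C₁² C₂² det G(v)`, and the claim follows by
taking the supremum over `v`. The supremum is finite because `φ` is a linear functional on
`⋀ᵐ V`, on which `√(det G(v))` is the norm of `v 0 ∧ ⋯ ∧ v (m - 1)`.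
-/

namespace Matrix

variable {n : Type*} [Fintype n] [DecidableEq n] [Nonempty n]

theorem PosSemidef.one_add_det_le_det_one_add {C : Matrix n n ℝ} (hC : C.PosSemidef) :
    1 + C.det ≤ (1 + C).det := by
  have hdet : (1 + C).det = ∏ i, (1 + hC.1.eigenvalues i) := by
    have h := congrArg (Polynomial.eval (-1)) hC.1.charpoly_eq
    have hneg : scalar n (-1 : ℝ) - C = -(1 + C) := by
      rw [map_neg, map_one]; abel
    simp only [eval_charpoly, Polynomial.eval_prod, Polynomial.eval_sub, Polynomial.eval_X,
      Polynomial.eval_C, hneg, det_neg, ← neg_add', Finset.prod_neg] at h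
    rw [Finset.card_univ] at h
    simpa using mul_left_cancel₀ (pow_ne_zero _ (neg_ne_zero.2 one_ne_zero)) h
  have hev := hC.eigenvalues_nonneg
  obtain ⟨i⟩ := ‹Nonempty n›
  rw [hdet, hC.1.det_eq_prod_eigenvalues]
  simpa using Finset.prod_add_prod_le (f := fun j => 1 + hC.1.eigenvalues j) (g := 1)
    (Finset.mem_univ i) le_rfl (fun j _ _ => by simp [hev j])
    (fun j _ _ => by simp) (fun _ _ => zero_le_one) (fun j _ => hev j)

theorem PosDef.det_add_det_le_det_add {A B : Matrix n n ℝ} (hA : A.PosDef)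
    (hB : B.PosSemidef) : A.det + B.det ≤ (A + B).det := by
  open scoped MatrixOrder in
  obtain ⟨S, hSA, hS⟩ : ∃ S : Matrix n n ℝ, S * S = A ∧ S.IsHermitian :=
    ⟨CFC.sqrt A, CFC.sqrt_mul_sqrt_self A hA.posSemidef.nonneg,
      (CFC.sqrt_nonneg A).posSemidef.isHermitian⟩
  have hdetA : A.det = S.det * S.det := by rw [← hSA, det_mul]
  have hSunit : IsUnit S.det := isUnit_iff_ne_zero.2 fun h => by
    simpa [hdetA, h] using hA.det_pos.ne'
  set C := S⁻¹ * B * S⁻¹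
  have hC : C.PosSemidef := by
    have h := hB.conjTranspose_mul_mul_same S⁻¹
    rwa [hS.inv.eq] at h
  have hBC : B = S * C * S := by
    simp only [C, Matrix.mul_assoc, mul_nonsing_inv_cancel_left _ _ hSunit,
      nonsing_inv_mul_cancel_right _ _ hSunit]
  have hAB : A + B = S * (1 + C) * S := by
    rw [mul_add, add_mul, mul_one, hSA, ← hBC]
  calc A.det + B.det = A.det * (1 + C.det) := by rw [hBC, det_mul, det_mul, hdetA]; ring
    _ ≤ A.det * (1 + C).det :=
        mul_le_mul_of_nonneg_left hC.one_add_det_le_det_one_add hA.det_pos.le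
    _ = (A + B).det := by rw [hAB, det_mul, det_mul, hdetA]; ring

end Matrix

section InnerProductSpace

variable {E : Type*} [NormedAddCommGroup E] [InnerProductSpace ℝ E] [FiniteDimensional ℝ E]
  {m : ℕ}

theorem sqrt_det_gram_eq_norm_ιMulti (v : Fin m → E) :
    √(gram ℝ v).det = ‖exteriorPower.ιMulti ℝ m v‖ := by
  rw [← exteriorPower.inner_ιMulti_self, real_inner_self_eq_norm_sq,
    Real.sqrt_sq (norm_nonneg _)]

theorem AlternatingMap.exists_abs_apply_le_mul_sqrt_det_gram (φ : E [⋀^Fin m]→ₗ[ℝ] ℝ) :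
    ∃ C, ∀ v, |φ v| ≤ C * √(gram ℝ v).det := by
  let Φ := LinearMap.toContinuousLinearMap (exteriorPower.alternatingMapLinearEquiv φ)
  refine ⟨‖Φ‖, fun v => ?_⟩
  rw [sqrt_det_gram_eq_norm_ιMulti, ← Real.norm_eq_abs,
    ← exteriorPower.alternatingMapLinearEquiv_apply_ιMulti]
  exact Φ.le_opNorm _

theorem det_gram_update_neg (v : Fin m → E) (i : Fin m) :
    (gram ℝ (Function.update v i (-v i))).det = (gram ℝ v).det := by
  rw [← exteriorPower.inner_ιMulti_self, ← exteriorPower.inner_ιMulti_self,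
    AlternatingMap.map_update_neg, Function.update_eq_self, inner_neg_neg]

end InnerProductSpace

section BilinForm

variable {V : Type*} [AddCommGroup V] [Module ℝ V] {m : ℕ}

/-- For the inner product space structure built from this core, `gramMat m g v` is definitionally
`gram ℝ v`; this is how Mathlib's facts about Gram matrices are transferred to `g` below. -/
abbrev LinearMap.BilinForm.toInnerProductSpaceCore (g : LinearMap.BilinForm ℝ V)
    (hsymm : g.IsSymm) (hpos : ∀ v : V, v ≠ 0 → 0 < g v v) : InnerProductSpace.Core ℝ V where
  inner x y := g x y
  conj_inner_symm x y := hsymm.eq y x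
  re_inner_nonneg x := by
    rcases eq_or_ne x 0 with rfl | hx
    · simp
    · exact (hpos x hx).le
  add_left x y z := by simp
  smul_left x y r := by simp
  definite x hx := by_contra fun h => (hpos x h).ne' hx

theorem gramMat_add (g h : LinearMap.BilinForm ℝ V) (v : Fin m → V) :
    gramMat m (g + h) v = gramMat m g v + gramMat m h v := rfl

theorem gramMat_smul (c : ℝ) (g : LinearMap.BilinForm ℝ V) (v : Fin m → V) :
    gramMat m (c • g) v = c • gramMat m g v := rfl

variable {g : LinearMap.BilinForm ℝ V} {φ : V [⋀^Fin m]→ₗ[ℝ] ℝ}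

theorem posDef_gramMat (hsymm : g.IsSymm) (hpos : ∀ v : V, v ≠ 0 → 0 < g v v)
    {v : Fin m → V} (hv : LinearIndependent ℝ v) : (gramMat m g v).PosDef :=
  let _ := (g.toInnerProductSpaceCore hsymm hpos).toNormedAddCommGroup
  let _ := InnerProductSpace.ofCore (g.toInnerProductSpaceCore hsymm hpos).toCore
  posDef_gram_of_linearIndependent hv

theorem linearIndependent_of_det_gramMat_ne_zero (hsymm : g.IsSymm)
    (hpos : ∀ v : V, v ≠ 0 → 0 < g v v) {v : Fin m → V} (h : (gramMat m g v).det ≠ 0) :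
    LinearIndependent ℝ v :=
  let _ := (g.toInnerProductSpaceCore hsymm hpos).toNormedAddCommGroup
  let _ := InnerProductSpace.ofCore (g.toInnerProductSpaceCore hsymm hpos).toCore
  linearIndependent_of_det_gram_ne_zero h

theorem det_gramMat_update_neg (hsymm : g.IsSymm) (hpos : ∀ v : V, v ≠ 0 → 0 < g v v)
    [FiniteDimensional ℝ V] (v : Fin m → V) (i : Fin m) :
    (gramMat m g (Function.update v i (-v i))).det = (gramMat m g v).det :=
  let _ := (g.toInnerProductSpaceCore hsymm hpos).toNormedAddCommGroup
  let _ := InnerProductSpace.ofCore (g.toInnerProductSpaceCore hsymm hpos).toCore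
  det_gram_update_neg v i

theorem AlternatingMap.exists_abs_apply_le_mul_sqrt_det_gramMat (hsymm : g.IsSymm)
    (hpos : ∀ v : V, v ≠ 0 → 0 < g v v) [FiniteDimensional ℝ V] (φ : V [⋀^Fin m]→ₗ[ℝ] ℝ) :
    ∃ C, ∀ v, |φ v| ≤ C * √(gramMat m g v).det :=
  let _ := (g.toInnerProductSpaceCore hsymm hpos).toNormedAddCommGroup
  let _ := InnerProductSpace.ofCore (g.toInnerProductSpaceCore hsymm hpos).toCore
  φ.exists_abs_apply_le_mul_sqrt_det_gram

def comassRatios (m : ℕ) (g : LinearMap.BilinForm ℝ V) (φ : V [⋀^Fin m]→ₗ[ℝ] ℝ) : Set ℝ :=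
  {x : ℝ | ∃ v : Fin m → V, (gramMat m g v).det ≠ 0 ∧
    x = φ v / Real.sqrt (gramMat m g v).det}

theorem comass_eq_sSup_comassRatios : comass m g φ = sSup (comassRatios m g φ) := rfl

theorem neg_mem_comassRatios [FiniteDimensional ℝ V] (hm : 1 ≤ m) (hsymm : g.IsSymm)
    (hpos : ∀ v : V, v ≠ 0 → 0 < g v v) {x : ℝ} (hx : x ∈ comassRatios m g φ) :
    -x ∈ comassRatios m g φ := by
  obtain ⟨v, hv, rfl⟩ := hx
  have hdet := det_gramMat_update_neg hsymm hpos v ⟨0, hm⟩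
  refine ⟨Function.update v ⟨0, hm⟩ (-v ⟨0, hm⟩), hdet ▸ hv, ?_⟩
  rw [hdet, φ.map_update_neg, Function.update_eq_self, neg_div]

theorem bddAbove_comassRatios [FiniteDimensional ℝ V] (hsymm : g.IsSymm)
    (hpos : ∀ v : V, v ≠ 0 → 0 < g v v) : BddAbove (comassRatios m g φ) := by
  obtain ⟨C, hC⟩ := φ.exists_abs_apply_le_mul_sqrt_det_gramMat hsymm hpos
  refine ⟨C, ?_⟩
  rintro _ ⟨v, hv, rfl⟩
  have hd := (posDef_gramMat hsymm hpos
    (linearIndependent_of_det_gramMat_ne_zero hsymm hpos hv)).det_pos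
  rw [div_le_iff₀ (Real.sqrt_pos.2 hd)]
  exact (le_abs_self _).trans (hC v)

theorem comass_nonneg [FiniteDimensional ℝ V] (hm : 1 ≤ m) (hsymm : g.IsSymm)
    (hpos : ∀ v : V, v ≠ 0 → 0 < g v v) : 0 ≤ comass m g φ := by
  rcases (comassRatios m g φ).eq_empty_or_nonempty with h | ⟨x, hx⟩
  · rw [comass_eq_sSup_comassRatios, h, Real.sSup_empty]
  · refine Real.sSup_nonneg' ⟨|x|, ?_, abs_nonneg x⟩
    rcases abs_choice x with h | h <;> rw [h]
    exacts [hx, neg_mem_comassRatios hm hsymm hpos hx]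

theorem sq_le_comass_sq_mul_det_gramMat [FiniteDimensional ℝ V] (hm : 1 ≤ m)
    (hsymm : g.IsSymm) (hpos : ∀ v : V, v ≠ 0 → 0 < g v v) {v : Fin m → V}
    (hv : LinearIndependent ℝ v) : φ v ^ 2 ≤ comass m g φ ^ 2 * (gramMat m g v).det := by
  have hd := (posDef_gramMat hsymm hpos hv).det_pos
  have hx : φ v / √(gramMat m g v).det ∈ comassRatios m g φ := ⟨v, hd.ne', rfl⟩
  have hbdd := bddAbove_comassRatios (φ := φ) hsymm hpos
  have hsq := sq_le_sq' (neg_le.1 (le_csSup hbdd (neg_mem_comassRatios hm hsymm hpos hx)))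
    (le_csSup hbdd hx)
  rwa [div_pow, Real.sq_sqrt hd.le, div_le_iff₀ hd] at hsq

theorem comass_sq_mul_le [FiniteDimensional ℝ V] (hm : 1 ≤ m) (hsymm : g.IsSymm)
    (hpos : ∀ v : V, v ≠ 0 → 0 < g v v) {K M : ℝ} (hK : 0 ≤ K) (hM : 0 ≤ M)
    (h : ∀ v, LinearIndependent ℝ v → φ v ^ 2 * K ≤ M * (gramMat m g v).det) :
    comass m g φ ^ 2 * K ≤ M := by
  rcases hK.eq_or_lt with rfl | hK
  · simpa using hM
  have hle : comass m g φ ≤ √(M / K) := by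
    refine Real.sSup_le ?_ (Real.sqrt_nonneg _)
    rintro _ ⟨v, hv, rfl⟩
    have hv' := linearIndependent_of_det_gramMat_ne_zero hsymm hpos hv
    have hd := (posDef_gramMat hsymm hpos hv').det_pos
    refine (le_abs_self _).trans (Real.abs_le_sqrt ?_)
    rw [div_pow, Real.sq_sqrt hd.le, div_le_div_iff₀ hd hK]
    exact h v hv'
  rwa [Real.le_sqrt (comass_nonneg hm hsymm hpos) (div_nonneg hM hK.le), le_div_iff₀ hK] at hle

theorem pow_mul_det_add_le_det_gramMat_smul_add_smul (hm : 1 ≤ m)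
    {g₁ g₂ : LinearMap.BilinForm ℝ V}
    (hg₁symm : g₁.IsSymm) (hg₁pos : ∀ v : V, v ≠ 0 → 0 < g₁ v v)
    (hg₂symm : g₂.IsSymm) (hg₂pos : ∀ v : V, v ≠ 0 → 0 < g₂ v v)
    {a b : ℝ} (ha : 0 < a) (hb : 0 < b) {v : Fin m → V} (hv : LinearIndependent ℝ v) :
    a ^ m * (gramMat m g₁ v).det + b ^ m * (gramMat m g₂ v).det ≤
      (gramMat m (a • g₁ + b • g₂) v).det := by
  have : Nonempty (Fin m) := ⟨⟨0, hm⟩⟩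
  have h := ((posDef_gramMat hg₁symm hg₁pos hv).smul ha).det_add_det_le_det_add
    ((posDef_gramMat hg₂symm hg₂pos hv).smul hb).posSemidef
  rw [det_smul, det_smul, Fintype.card_fin] at h
  rwa [gramMat_add, gramMat_smul, gramMat_smul]

end BilinForm

theorem comass_glue_control_general {V : Type*} [AddCommGroup V] [Module ℝ V]
    [FiniteDimensional ℝ V] (m : ℕ) (hm : 1 ≤ m)
    (g₁ g₂ : LinearMap.BilinForm ℝ V)
    (hg₁symm : g₁.IsSymm) (hg₁pos : ∀ v : V, v ≠ 0 → 0 < g₁ v v)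
    (hg₂symm : g₂.IsSymm) (hg₂pos : ∀ v : V, v ≠ 0 → 0 < g₂ v v)
    (a b : ℝ) (ha : 0 < a) (hb : 0 < b)
    (φ : V [⋀^Fin m]→ₗ[ℝ] ℝ) :
    (comass m (a • g₁ + b • g₂) φ) ^ 2 *
      (a ^ m * (comass m g₂ φ) ^ 2 + b ^ m * (comass m g₁ φ) ^ 2) ≤
      (comass m g₁ φ) ^ 2 * (comass m g₂ φ) ^ 2 := by
  have hsymm : (a • g₁ + b • g₂).IsSymm :=
    ⟨fun x y => by simp [hg₁symm.eq x y, hg₂symm.eq x y]⟩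
  have hpos : ∀ v : V, v ≠ 0 → 0 < (a • g₁ + b • g₂) v v := fun v hv => by
    simpa using add_pos (mul_pos ha (hg₁pos v hv)) (mul_pos hb (hg₂pos v hv))
  refine comass_sq_mul_le hm hsymm hpos (by positivity) (by positivity) fun v hv => ?_
  have h₁ := sq_le_comass_sq_mul_det_gramMat (φ := φ) hm hg₁symm hg₁pos hv
  have h₂ := sq_le_comass_sq_mul_det_gramMat (φ := φ) hm hg₂symm hg₂pos hv
  have hdet :=
    pow_mul_det_add_le_det_gramMat_smul_add_smul hm hg₁symm hg₁pos hg₂symm hg₂pos ha hb hv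
  set C₁ := comass m g₁ φ
  set C₂ := comass m g₂ φ
  calc φ v ^ 2 * (a ^ m * C₂ ^ 2 + b ^ m * C₁ ^ 2)
      = a ^ m * C₂ ^ 2 * φ v ^ 2 + b ^ m * C₁ ^ 2 * φ v ^ 2 := by ring
    _ ≤ a ^ m * C₂ ^ 2 * (C₁ ^ 2 * (gramMat m g₁ v).det)
        + b ^ m * C₁ ^ 2 * (C₂ ^ 2 * (gramMat m g₂ v).det) := by gcongr
    _ = C₁ ^ 2 * C₂ ^ 2 * (a ^ m * (gramMat m g₁ v).det + b ^ m * (gramMat m g₂ v).det) := by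
        ring
    _ ≤ C₁ ^ 2 * C₂ ^ 2 * (gramMat m (a • g₁ + b • g₂) v).det := by gcongr

/-- Comass Control for Gluing Procedure. -/
theorem comass_glue_control {V : Type*} [AddCommGroup V] [Module ℝ V]
    [FiniteDimensional ℝ V] (m : ℕ) (hm : 1 ≤ m) (hm' : m ≤ Module.finrank ℝ V)
    (g₁ g₂ : LinearMap.BilinForm ℝ V)
    (hg₁symm : g₁.IsSymm) (hg₁pos : ∀ v : V, v ≠ 0 → 0 < g₁ v v)
    (hg₂symm : g₂.IsSymm) (hg₂pos : ∀ v : V, v ≠ 0 → 0 < g₂ v v)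
    (a b : ℝ) (ha : 0 < a) (hb : 0 < b)
    (φ : V [⋀^Fin m]→ₗ[ℝ] ℝ) :
    (comass m (a • g₁ + b • g₂) φ) ^ 2 *
      (a ^ m * (comass m g₂ φ) ^ 2 + b ^ m * (comass m g₁ φ) ^ 2) ≤
      (comass m g₁ φ) ^ 2 * (comass m g₂ φ) ^ 2 :=
  comass_glue_control_general m hm g₁ g₂ hg₁symm hg₁pos hg₂symm hg₂pos a b ha hb φ
end

section
/- Let E be a finite-dimensional real inner product space, M a real inner product space of finite dimension m ≥ 1, and π : E →ₗ[ℝ] M a surjective linear map with kernel F such that ⟪π x, π y⟫ = ⟪x, y⟫ for all x, y in the orthogonal complement Fᗮ. Let ω be an alternating m-form on M with ω b = 1 for some orthonormal basis b of M. Then comass (π*ω) = 1. -/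
open Matrix

/-- The Gram matrix of an `m`-tuple of vectors in a real inner product space. -/
noncomputable def gramIP {E : Type*} [NormedAddCommGroup E] [InnerProductSpace ℝ E]
    (m : ℕ) (v : Fin m → E) : Matrix (Fin m) (Fin m) ℝ :=
  Matrix.of fun i j => (inner ℝ (v i) (v j) : ℝ)

/-- The comass of an alternating `m`-form on a real inner product space. -/
noncomputable def comassIP {E : Type*} [NormedAddCommGroup E] [InnerProductSpace ℝ E]
    (m : ℕ) (φ : E [⋀^Fin m]→ₗ[ℝ] ℝ) : ℝ :=
  sSup {x : ℝ | ∃ v : Fin m → E, (gramIP m v).det ≠ 0 ∧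
    x = φ v / Real.sqrt (gramIP m v).det}

/-!
`π` is the orthogonal projection onto the horizontal space `(ker π)ᗮ` followed by an isometry,
so it is a contraction and `gram (π ∘ w) ≤ gram w` in the Loewner order. The determinant is
Loewner-monotone on positive semidefinite matrices, and `ω` is the volume form of `M`, so
`|ω (π ∘ w)| = √(det (gram (π ∘ w))) ≤ √(det (gram w))`: the comass is at most `1`. Equality
holds on the horizontal lift of `b`, which is orthonormal.
-/

open scoped InnerProductSpace MatrixOrder

namespace Matrix

variable {n : Type*} [Fintype n]

theorem one_le_det_of_one_le [DecidableEq n] {A : Matrix n n ℝ} (hA : 1 ≤ A) : 1 ≤ A.det := by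
  have hAh : A.IsHermitian := (nonneg_iff_posSemidef.1 (zero_le_one.trans hA)).isHermitian
  have hev : ∀ i, 1 ≤ hAh.eigenvalues i := fun i =>
    (CFC.one_le_iff A).1 hA _ (hAh.eigenvalues_mem_spectrum_real i)
  rw [hAh.det_eq_prod_eigenvalues]
  exact Finset.one_le_prod fun i _ => by simpa using hev i

theorem PosSemidef.det_le_det_of_le [DecidableEq n] {A B : Matrix n n ℝ} (hA : A.PosSemidef)
    (hAB : A ≤ B) : A.det ≤ B.det := by
  have hB : B.PosSemidef := nonneg_iff_posSemidef.1 (hA.nonneg.trans hAB)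
  rcases hA.det_nonneg.eq_or_lt with hA0 | hApos
  · exact hA0 ▸ hB.det_nonneg
  -- Conjugating by `R⁻¹ = A^(-1/2)` turns `A ≤ B` into `1 ≤ R⁻¹ * B * R⁻¹`.
  set R := CFC.sqrt A
  have hRR : R * R = A := CFC.sqrt_mul_sqrt_self A hA.nonneg
  have hRdet : R.det * R.det = A.det := by rw [← det_mul, hRR]
  have hRunit : IsUnit R.det := isUnit_iff_ne_zero.2 fun h => by
    rw [h, zero_mul] at hRdet; exact hApos.ne hRdet
  have hRinv : IsSelfAdjoint R⁻¹ := (CFC.sqrt_nonneg A).isSelfAdjoint.isHermitian.inv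
  have hone : 1 ≤ R⁻¹ * B * R⁻¹ := by
    have := hRinv.conjugate_le_conjugate hAB
    rwa [← hRR, ← mul_assoc, nonsing_inv_mul _ hRunit, one_mul, mul_nonsing_inv _ hRunit] at this
  have hdet : (R⁻¹ * B * R⁻¹).det = B.det / A.det := by
    rw [det_mul, det_mul, det_nonsing_inv, ← hRdet, Ring.inverse_eq_inv]; field_simp
  have := one_le_det_of_one_le hone
  rwa [hdet, one_le_div hApos] at this

theorem gram_comp_le_gram {E F : Type*} [NormedAddCommGroup E] [InnerProductSpace ℝ E]
    [NormedAddCommGroup F] [InnerProductSpace ℝ F] {f : E →ₗ[ℝ] F} (hf : ∀ x, ‖f x‖ ≤ ‖x‖)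
    (v : n → E) : gram ℝ (f ∘ v) ≤ gram ℝ v := by
  refine le_iff.2 <| .of_dotProduct_mulVec_nonneg
    ((isHermitian_gram ℝ v).sub (isHermitian_gram ℝ _)) fun x => ?_
  rw [sub_mulVec, dotProduct_sub, star_dotProduct_gram_mulVec, star_dotProduct_gram_mulVec,
    sub_nonneg]
  simp only [Function.comp_apply, ← map_smul, ← map_sum, real_inner_self_eq_norm_sq]
  gcongr
  exact hf _

end Matrix

section

variable {E M : Type*} [NormedAddCommGroup E] [InnerProductSpace ℝ E]
  [NormedAddCommGroup M] [InnerProductSpace ℝ M]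

theorem gramIP_eq_gram (m : ℕ) (v : Fin m → E) : gramIP m v = gram ℝ v := rfl

theorem OrthonormalBasis.det_gram_eq_sq {ι : Type*} [Fintype ι] [DecidableEq ι]
    (b : OrthonormalBasis ι ℝ M) (w : ι → M) : (gram ℝ w).det = b.toBasis.det w ^ 2 := by
  rw [gram_eq_conjTranspose_mul b, det_mul, det_conjTranspose, Module.Basis.det_apply, sq]
  simp only [star_trivial]
  rfl

theorem AlternatingMap.abs_apply_eq_sqrt_det_gram {ι : Type*} [Fintype ι] [DecidableEq ι]
    (b : OrthonormalBasis ι ℝ M) {ω : M [⋀^ι]→ₗ[ℝ] ℝ} (hω : ω b = 1) (w : ι → M) :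
    |ω w| = √(gram ℝ w).det := by
  rw [b.det_gram_eq_sq, Real.sqrt_sq_eq_abs, ω.eq_smul_basis_det b.toBasis]
  simp [hω]

namespace LinearMap

variable [FiniteDimensional ℝ E] (π : E →ₗ[ℝ] M)

theorem apply_starProjection_orthogonal_ker (x : E) :
    π ((ker π)ᗮ.starProjection x) = π x := by
  rw [Submodule.starProjection_orthogonal, _root_.sub_apply, map_sub,
    ContinuousLinearMap.id_apply, mem_ker.1 ((ker π).starProjection_apply_mem x), sub_zero]

variable {π} (hiso : ∀ x ∈ (ker π)ᗮ, ∀ y ∈ (ker π)ᗮ, ⟪π x, π y⟫_ℝ = ⟪x, y⟫_ℝ)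
include hiso

theorem norm_apply_le_of_isometry_on_orthogonal_ker (x : E) : ‖π x‖ ≤ ‖x‖ := by
  set p := (ker π)ᗮ.starProjection x
  have hp : p ∈ (ker π)ᗮ := Submodule.starProjection_apply_mem _ x
  calc ‖π x‖ = ‖π p‖ := by rw [apply_starProjection_orthogonal_ker]
    _ = ‖p‖ := by
      rw [norm_eq_sqrt_real_inner, norm_eq_sqrt_real_inner, hiso p hp p hp]
    _ ≤ ‖x‖ := Submodule.norm_starProjection_apply_le _ x

theorem exists_orthonormal_comp_eq_of_isometry_on_orthogonal_ker
    (hsurj : Function.Surjective π) {ι : Type*} {b : ι → M} (hb : Orthonormal ℝ b) :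
    ∃ v : ι → E, Orthonormal ℝ v ∧ π ∘ v = b := by
  classical
  set v : ι → E := fun i => (ker π)ᗮ.starProjection (Function.surjInv hsurj (b i))
  have hv : ∀ i, v i ∈ (ker π)ᗮ := fun i => Submodule.starProjection_apply_mem _ _
  have hπv : ∀ i, π (v i) = b i := fun i => by
    simp only [v, apply_starProjection_orthogonal_ker, Function.surjInv_eq hsurj]
  refine ⟨v, orthonormal_iff_ite.2 fun i j => ?_, funext hπv⟩
  rw [← hiso _ (hv i) _ (hv j), hπv, hπv]
  exact orthonormal_iff_ite.1 hb i j

theorem abs_apply_comp_le_sqrt_det_gram {ι : Type*} [Fintype ι] [DecidableEq ι]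
    (b : OrthonormalBasis ι ℝ M) {ω : M [⋀^ι]→ₗ[ℝ] ℝ} (hω : ω b = 1) (w : ι → E) :
    |ω (π ∘ w)| ≤ √(gram ℝ w).det := by
  rw [ω.abs_apply_eq_sqrt_det_gram b hω]
  gcongr
  exact (posSemidef_gram ℝ _).det_le_det_of_le
    (gram_comp_le_gram (norm_apply_le_of_isometry_on_orthogonal_ker hiso) w)

end LinearMap

end

theorem comass_pullback_eq_one_general {E M : Type*}
    [NormedAddCommGroup E] [InnerProductSpace ℝ E] [FiniteDimensional ℝ E]
    [NormedAddCommGroup M] [InnerProductSpace ℝ M]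
    (m : ℕ)
    (π : E →ₗ[ℝ] M) (hsurj : Function.Surjective π)
    (hiso : ∀ x ∈ (LinearMap.ker π)ᗮ, ∀ y ∈ (LinearMap.ker π)ᗮ,
      (inner ℝ (π x) (π y) : ℝ) = (inner ℝ x y : ℝ))
    (ω : M [⋀^Fin m]→ₗ[ℝ] ℝ)
    (b : OrthonormalBasis (Fin m) ℝ M) (hω : ω ⇑b = 1) :
    comassIP m (ω.compLinearMap π) = 1 := by
  simp only [comassIP, gramIP_eq_gram]
  obtain ⟨v, hv, hπv⟩ :=
    LinearMap.exists_orthonormal_comp_eq_of_isometry_on_orthogonal_ker hiso hsurj b.orthonormal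
  have hgram : gram ℝ v = 1 := gram_eq_one_iff_orthonormal.2 hv
  refine IsGreatest.csSup_eq ⟨⟨v, by simp [hgram], by
    rw [hgram, det_one, Real.sqrt_one, div_one, ← hω, ← hπv]; rfl⟩, ?_⟩
  rintro _ ⟨w, hw, rfl⟩
  have hpos : 0 < (gram ℝ w).det := (posSemidef_gram ℝ w).det_nonneg.lt_of_ne' hw
  rw [div_le_one (Real.sqrt_pos.2 hpos)]
  exact (le_abs_self _).trans (LinearMap.abs_apply_comp_le_sqrt_det_gram hiso b hω w)

theorem comass_pullback_eq_one {E M : Type*}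
    [NormedAddCommGroup E] [InnerProductSpace ℝ E] [FiniteDimensional ℝ E]
    [NormedAddCommGroup M] [InnerProductSpace ℝ M] [FiniteDimensional ℝ M]
    (m : ℕ) (hm : 1 ≤ m) (hM : Module.finrank ℝ M = m)
    (π : E →ₗ[ℝ] M) (hsurj : Function.Surjective π)
    (hiso : ∀ x ∈ (LinearMap.ker π)ᗮ, ∀ y ∈ (LinearMap.ker π)ᗮ,
      (inner ℝ (π x) (π y) : ℝ) = (inner ℝ x y : ℝ))
    (ω : M [⋀^Fin m]→ₗ[ℝ] ℝ)
    (b : OrthonormalBasis (Fin m) ℝ M) (hω : ω ⇑b = 1) :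
    comassIP m (ω.compLinearMap π) = 1 :=
  comass_pullback_eq_one_general m π hsurj hiso ω b hω
end
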